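/- Let z̄ = (1/K)∑_{k=1}^K z_k and t̄ = (1/K)∑_{k=1}^K t_k be averages of i.i.d. random variables with z_k ∈ {-1,1}, E[z_k] = tanh(v/2), t_k > 0 bounded with E[t_k] = tanh(v/2)/(2v) (v ≠ 0), t̄ ≥ c > 0 a.s., and Var(t_k) < ∞. Then E[(z̄/t̄ - 2v)²] ≤ C/K for some constant C. -/

import Mathlib

/-!
Put `w_k = z_k - 2v t_k`. The two moment identities make `w_k` centred, and
`z̄ / t̄ - 2v = w̄ / t̄`. As `t̄ ≥ c`, the squared error is at most `w̄² / c²`, and `w̄` is the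
mean of `K` i.i.d. centred bounded variables, so `E[w̄²] = Var(w_0) / K`.
-/

open MeasureTheory ProbabilityTheory Finset
open scoped ProbabilityTheory

theorem sq_div_sub_le_sq_sub_mul_div {a b c r : ℝ} (hc : 0 < c) (hcb : c ≤ b) :
    (a / b - r) ^ 2 ≤ ((a - b * r) / c) ^ 2 := by
  rw [div_sub' (hc.trans_le hcb).ne', div_pow, div_pow]
  gcongr

section

variable {Ω : Type*} [MeasurableSpace Ω] {μ : Measure Ω}

theorem integral_sq_div_sub_le {Z T : Ω → ℝ} {c r : ℝ} (hc : 0 < c) (hT : ∀ᵐ ω ∂μ, c ≤ T ω)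
    (hint : Integrable (fun ω => (Z ω - T ω * r) ^ 2) μ) :
    ∫ ω, (Z ω / T ω - r) ^ 2 ∂μ ≤ (∫ ω, (Z ω - T ω * r) ^ 2 ∂μ) / c ^ 2 := by
  rw [← integral_div]
  refine integral_mono_of_nonneg (ae_of_all _ fun ω => sq_nonneg _) (hint.div_const _) ?_
  filter_upwards [hT] with ω hω
  simpa only [div_pow] using sq_div_sub_le_sq_sub_mul_div (a := Z ω) (r := r) hc hω

theorem variance_sum_range_of_identDistrib {X : ℕ → Ω → ℝ} (hX : MemLp (X 0) 2 μ)
    (hind : Pairwise fun i j => X i ⟂ᵢ[μ] X j) (hid : ∀ k, IdentDistrib (X k) (X 0) μ μ)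
    (K : ℕ) : Var[∑ k ∈ range K, X k; μ] = K * Var[X 0; μ] := by
  rw [IndepFun.variance_sum (fun k _ => (hid k).memLp_iff.2 hX) fun i _ j _ hij => hind hij]
  simp [fun k => (hid k).variance_eq]

theorem integral_sq_sampleMean_of_identDistrib [IsProbabilityMeasure μ] {X : ℕ → Ω → ℝ}
    (hX : MemLp (X 0) 2 μ) (hind : Pairwise fun i j => X i ⟂ᵢ[μ] X j)
    (hid : ∀ k, IdentDistrib (X k) (X 0) μ μ) (hmean : μ[X 0] = 0) (K : ℕ) :
    ∫ ω, ((1 / (K : ℝ)) * ∑ k ∈ range K, X k ω) ^ 2 ∂μ = Var[X 0; μ] / K := by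
  have hXk : ∀ k, MemLp (X k) 2 μ := fun k => (hid k).memLp_iff.2 hX
  have hS : MemLp (∑ k ∈ range K, X k) 2 μ := memLp_finsetSum' _ fun k _ => hXk k
  have hES : μ[∑ k ∈ range K, X k] = 0 := by
    simp only [Finset.sum_apply]
    rw [integral_finsetSum _ fun k _ => (hXk k).integrable one_le_two]
    simp [fun k => (hid k).integral_eq, hmean]
  have hVar := variance_eq_sub hS
  rw [hES, variance_sum_range_of_identDistrib hX hind hid] at hVar
  have hsq : ∫ ω, (∑ k ∈ range K, X k ω) ^ 2 ∂μ = K * Var[X 0; μ] := by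
    simpa [Finset.sum_apply] using hVar.symm
  simp only [mul_pow, integral_const_mul, hsq]
  rcases K.eq_zero_or_pos with rfl | hK
  · simp
  · field_simp

end

/-- For i.i.d. pairs `(z_k, t_k)` with `z_k ∈ {-1,1}`, `E[z_k] = tanh(v/2)`,
`0 < t_k ≤ B` with `E[t_k] = tanh(v/2)/(2v)` (`v ≠ 0`), and `t̄ ≥ c > 0` a.s., the
empirical ratio satisfies `E[(z̄/t̄ - 2v)²] ≤ C/K` for some constant `C`. -/
theorem empirical_ratio_rate {Ω : Type*} [MeasureSpace Ω]
    [IsProbabilityMeasure (ℙ : Measure Ω)]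
    (z t : ℕ → Ω → ℝ) (hzm : ∀ k, Measurable (z k)) (htm : ∀ k, Measurable (t k))
    (hiid : iIndepFun (fun k ω => (z k ω, t k ω)) ℙ)
    (hid : ∀ k, IdentDistrib (fun ω => (z k ω, t k ω)) (fun ω => (z 0 ω, t 0 ω)) ℙ ℙ)
    (hzval : ∀ k ω, z k ω = 1 ∨ z k ω = -1)
    (Bnd : ℝ) (htb : ∀ k ω, 0 < t k ω ∧ t k ω ≤ Bnd)
    (v : ℝ) (hv : v ≠ 0)
    (hEz : ∫ ω, z 0 ω = Real.tanh (v / 2))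
    (hEt : ∫ ω, t 0 ω = Real.tanh (v / 2) / (2 * v))
    (c : ℝ) (hc : 0 < c)
    (htbar : ∀ K : ℕ, 0 < K → ∀ᵐ ω, c ≤ (1 / (K : ℝ)) * ∑ k ∈ range K, t k ω) :
    ∃ C : ℝ, ∀ K : ℕ, 0 < K →
      ∫ ω, (((1 / (K : ℝ)) * ∑ k ∈ range K, z k ω) /
              ((1 / (K : ℝ)) * ∑ k ∈ range K, t k ω) - 2 * v) ^ 2 ≤ C / K := by
  set w : ℕ → Ω → ℝ := fun k ω => z k ω - 2 * v * t k ω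
  have hz : MemLp (z 0) 2 ℙ :=
    .of_bound (hzm 0).aestronglyMeasurable 1 <| ae_of_all _ fun ω => by
      rcases hzval 0 ω with h | h <;> simp [h]
  have ht : MemLp (t 0) 2 ℙ :=
    .of_bound (htm 0).aestronglyMeasurable Bnd <| ae_of_all _ fun ω => by
      rw [Real.norm_eq_abs, abs_of_pos (htb 0 ω).1]
      exact (htb 0 ω).2
  have hw : MemLp (w 0) 2 ℙ := hz.sub (ht.const_mul _)
  have hw_mean : ∫ ω, w 0 ω = 0 := by
    rw [integral_sub (hz.integrable one_le_two) ((ht.integrable one_le_two).const_mul _),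
      integral_const_mul, hEz, hEt]
    field_simp
    ring
  have hf : Measurable fun p : ℝ × ℝ => p.1 - 2 * v * p.2 := by fun_prop
  have hw_ind : Pairwise fun i j => w i ⟂ᵢ[ℙ] w j := fun i j hij =>
    (hiid.comp (fun _ p => p.1 - 2 * v * p.2) fun _ => hf).indepFun hij
  have hw_id : ∀ k, IdentDistrib (w k) (w 0) ℙ ℙ := fun k => (hid k).comp hf
  refine ⟨Var[w 0; ℙ] / c ^ 2, fun K hK => ?_⟩
  have hdiff : ∀ ω, (1 / (K : ℝ)) * ∑ k ∈ range K, z k ω -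
      ((1 / (K : ℝ)) * ∑ k ∈ range K, t k ω) * (2 * v) =
      (1 / (K : ℝ)) * ∑ k ∈ range K, w k ω := fun ω => by
    simp only [w, mul_sum, sum_mul, ← sum_sub_distrib]
    exact sum_congr rfl fun k _ => by ring
  have hint : Integrable (fun ω => ((1 / (K : ℝ)) * ∑ k ∈ range K, w k ω) ^ 2) ℙ :=
    ((memLp_finsetSum _ fun k _ => (hw_id k).memLp_iff.2 hw).const_mul _).integrable_sq
  calc _ ≤ _ := integral_sq_div_sub_le hc (htbar K hK) (by simpa only [hdiff] using hint)
    _ = Var[w 0; ℙ] / c ^ 2 / K := by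
        simp only [hdiff]
        rw [integral_sq_sampleMean_of_identDistrib hw hw_ind hw_id hw_mean]
        ring
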